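/- Let x₀ ∈ ℝ, v ≥ 0 and b > 0, and let x, w : ℝ → ℝ be such that x(0) = x₀, w(0) = v, for every t ≥ 0 the function x has derivative w(t) at t, w is differentiable on [0,∞), w(t) ≥ 0 for every t ≥ 0, and w′(t) ≥ −b for every t ≥ 0 at which w(t) > 0. Then for every t ≥ 0, x(t) ≥ brk(t), where brk is the braking trajectory given by brk(t) = x₀ + v·t − (b/2)·t² for 0 ≤ t ≤ v/b and brk(t) = x₀ + v²/(2b) for t ≥ v/b. -/

import Mathlib

/-
While the velocity is positive it decreases at rate at most `b`; where it vanishes it is at a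
minimum (it is never negative), so its derivative there is `0 ≥ -b`. Comparing derivatives thus
gives `w t ≥ v - b t`, and comparing once more `x t ≥ x₀ + v t - (b/2) t²`, which is the braking
trajectory up to the stopping time `v / b`. After that time the braking trajectory is constant
while `x` is nondecreasing, since `w ≥ 0`.
-/

/-- The braking trajectory: position at time `t` of a vehicle starting at `x₀`
with speed `v`, braking at constant rate `b` until stopped (at time `v/b`). -/
noncomputable def brk (x₀ v b : ℝ) (t : ℝ) : ℝ :=
  if t ≤ v / b then x₀ + v * t - (b / 2) * t ^ 2 else x₀ + v ^ 2 / (2 * b)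

open Set Filter Topology

theorem image_le_of_hasDerivAt_le_Ici {f g f' g' : ℝ → ℝ} {a t : ℝ}
    (hf : ∀ s, a ≤ s → HasDerivAt f (f' s) s) (hg : ∀ s, a ≤ s → HasDerivAt g (g' s) s)
    (hle : ∀ s, a < s → g' s ≤ f' s) (ha : g a ≤ f a) (ht : a ≤ t) : g t ≤ f t := by
  have hderiv : ∀ s, a ≤ s → HasDerivAt (f - g) (f' s - g' s) s := fun s hs =>
    (hf s hs).sub (hg s hs)
  have hmono : MonotoneOn (f - g) (Ici a) := by
    refine monotoneOn_of_hasDerivWithinAt_nonneg (f' := fun s => f' s - g' s) (convex_Ici a)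
      (fun s hs => (hderiv s hs).continuousAt.continuousWithinAt) ?_ ?_ <;> rw [interior_Ici]
    · exact fun s hs => (hderiv s hs.le).hasDerivWithinAt
    · exact fun s hs => sub_nonneg.2 (hle s hs)
  have := hmono self_mem_Ici ht ht
  simp only [Pi.sub_apply] at this
  linarith

theorem le_deriv_of_eventually_nonneg {w : ℝ → ℝ} {t c : ℝ} (hc : c ≤ 0)
    (hw : ∀ᶠ s in 𝓝 t, 0 ≤ w s) (hpos : 0 < w t → c ≤ deriv w t) : c ≤ deriv w t := by
  rcases hw.self_of_nhds.lt_or_eq with hwt | hwt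
  · exact hpos hwt
  · have hmin : IsLocalMin w t := hw.mono fun s hs => hwt ▸ hs
    rwa [hmin.deriv_eq_zero]

theorem position_ge_braking_trajectory (x₀ v b : ℝ) (hv : 0 ≤ v) (hb : 0 < b)
    (x w : ℝ → ℝ)
    (hx0 : x 0 = x₀) (hw0 : w 0 = v)
    (hx : ∀ t : ℝ, 0 ≤ t → HasDerivAt x (w t) t)
    (hdiff : ∀ t : ℝ, 0 ≤ t → DifferentiableAt ℝ w t)
    (hnonneg : ∀ t : ℝ, 0 ≤ t → 0 ≤ w t)
    (hderiv : ∀ t : ℝ, 0 ≤ t → 0 < w t → -b ≤ deriv w t) :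
    ∀ t : ℝ, 0 ≤ t → brk x₀ v b t ≤ x t := by
  have hdecel : ∀ s, 0 < s → -b ≤ deriv w s := fun s hs =>
    le_deriv_of_eventually_nonneg (neg_nonpos.2 hb.le)
      (mem_of_superset (Ioi_mem_nhds hs) fun r hr => hnonneg r (le_of_lt hr)) (hderiv s hs.le)
  have hvel : ∀ t, 0 ≤ t → v - b * t ≤ w t := fun t ht =>
    image_le_of_hasDerivAt_le_Ici (g := fun s => v - b * s) (g' := fun _ => -b)
      (fun s hs => (hdiff s hs).hasDerivAt)
      (fun s _ => by simpa using ((hasDerivAt_id s).const_mul b).const_sub v)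
      hdecel (by simp [hw0]) ht
  have hparabola : ∀ s, HasDerivAt (fun s => x₀ + v * s - b / 2 * s ^ 2) (v - b * s) s :=
    fun s => (((hasDerivAt_id s).const_mul v).const_add x₀).sub
      ((hasDerivAt_pow 2 s).const_mul (b / 2)) |>.congr_deriv (by push_cast; ring)
  have hposition : ∀ t, 0 ≤ t → x₀ + v * t - b / 2 * t ^ 2 ≤ x t := fun t ht =>
    image_le_of_hasDerivAt_le_Ici hx (fun s _ => hparabola s) (fun s hs => hvel s hs.le)
      (by simp [hx0]) ht
  have hstop : 0 ≤ v / b := div_nonneg hv hb.le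
  intro t ht
  rcases le_or_gt t (v / b) with hbefore | hafter
  · rw [brk, if_pos hbefore]
    exact hposition t ht
  · rw [brk, if_neg hafter.not_ge]
    calc x₀ + v ^ 2 / (2 * b) = x₀ + v * (v / b) - b / 2 * (v / b) ^ 2 := by
          field_simp
          ring
      _ ≤ x (v / b) := hposition _ hstop
      _ ≤ x t := image_le_of_hasDerivAt_le_Ici (g' := fun _ => 0)
          (fun s hs => hx s (hstop.trans hs)) (fun _ _ => hasDerivAt_const _ (x (v / b)))
          (fun s hs => hnonneg s (hstop.trans hs.le)) le_rfl hafter.le
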